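/- arXiv:1405.2110 — 2 statements merged into one kernel-verified Lean document; each statement's English description precedes it below -/
import Mathlib

section
/- The map h: (ℝ², 0) → (ℝ², 0) defined in polar coordinates by (r, θ) ↦ (r, θ − log r) (and h(0) = 0) is a bi-Lipschitz homeomorphism germ at the origin; in particular, it maps the semi-line θ = 0 onto a logarithmic spiral. -/
open Filter MeasureTheory Topology

/-- `ℂⁿ` modelled as functions `Fin n → ℂ`. -/
abbrev En (n : ℕ) := Fin n → ℂ

/-- `a ≲ b` near `0` : there is `C > 0` with `a x ≤ C * b x` on a neighbourhood of `0`. -/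
def EvDom {E : Type*} [NormedAddCommGroup E] (a b : E → ℝ) : Prop :=
  ∃ C : ℝ, 0 < C ∧ ∀ᶠ x in 𝓝 (0 : E), a x ≤ C * b x

/-- The pair `(φ, ψ)` is a germ at `0` of a bi-Lipschitz homeomorphism `(E,0) → (F,0)`,
with `ψ` the inverse of `φ`. -/
def BiLipGerm {E F : Type*} [NormedAddCommGroup E] [NormedAddCommGroup F]
    (φ : E → F) (ψ : F → E) : Prop :=
  φ 0 = 0 ∧ ψ 0 = 0 ∧
  (∃ U ∈ 𝓝 (0 : E), ∃ K : NNReal, LipschitzOnWith K φ U) ∧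
  (∃ V ∈ 𝓝 (0 : F), ∃ K : NNReal, LipschitzOnWith K ψ V) ∧
  (∀ᶠ x in 𝓝 (0 : E), ψ (φ x) = x) ∧ (∀ᶠ y in 𝓝 (0 : F), φ (ψ y) = y)

/-- `f : (ℂⁿ,0) → (ℂ,0)` is a holomorphic germ with an isolated singularity at the origin. -/
def IsolatedSing {n : ℕ} (f : En n → ℂ) : Prop :=
  AnalyticAt ℂ f 0 ∧ f 0 = 0 ∧ fderiv ℂ f 0 = 0 ∧
    ∀ᶠ x in 𝓝[≠] (0 : En n), fderiv ℂ f x ≠ 0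

/-- The Łojasiewicz exponent `𝓛₀(∇f)` of the gradient map of `f`. -/
noncomputable def LojGrad {n : ℕ} (f : En n → ℂ) : ℝ :=
  sInf {α : ℝ | 0 ≤ α ∧ ∃ C : ℝ, 0 < C ∧
    ∀ᶠ x in 𝓝 (0 : En n), ‖x‖ ^ α ≤ C * ‖fderiv ℂ f x‖}

/-!
Identifying `ℝ²` with `ℂ`, the map is `z ↦ z · e^{-i log |z|}`, a member of the family
`S_c z = z · e^{i c log |z|}`. Each `S_c` preserves `|z|`, and `S_c ∘ S_d = S_{c+d}`, so `S_{-c}`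
inverts `S_c`. Each `S_c` is globally `(1 + |c|)`-Lipschitz: for `|w| ≤ |z|`,
`S_c z - S_c w = (z - w) e^{i c log |z|} + w (e^{i c log |z|} - e^{i c log |w|})`, and the second
term has norm at most `|c| · |w| log (|z| / |w|) ≤ |c| (|z| - |w|) ≤ |c| |z - w|`
because `log x ≤ x - 1`.
-/

open Complex

lemma Real.mul_log_sub_log_le {s t : ℝ} (hs : 0 < s) (ht : 0 < t) :
    s * (Real.log t - Real.log s) ≤ t - s := by
  have key := Real.log_le_sub_one_of_pos (div_pos ht hs)
  rw [Real.log_div ht.ne' hs.ne'] at key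
  calc s * (Real.log t - Real.log s) ≤ s * (t / s - 1) := by gcongr
    _ = t - s := by field_simp

lemma norm_exp_I_mul_ofReal_sub_exp_I_mul_ofReal_le (a b : ℝ) :
    ‖exp (I * a) - exp (I * b)‖ ≤ |a - b| := by
  have decomp : exp (I * a) - exp (I * b) = exp (I * b) * (exp (I * ↑(a - b)) - 1) := by
    rw [mul_sub, mul_one, ← exp_add]; push_cast; ring_nf
  rw [decomp, norm_mul, norm_exp_I_mul_ofReal, one_mul]
  exact Real.norm_exp_I_mul_ofReal_sub_one_le

/-- The junk value `log 0 = 0` is harmless here: the factor `z` makes `spiralMap c 0 = 0`. -/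
noncomputable def spiralMap (c : ℝ) (z : ℂ) : ℂ :=
  z * exp (I * ↑(c * Real.log ‖z‖))

section spiralMap

variable (c d : ℝ) (z w : ℂ)

@[simp]
lemma spiralMap_zero_right : spiralMap c 0 = 0 := by
  simp [spiralMap]

@[simp]
lemma spiralMap_zero_left : spiralMap 0 z = z := by
  simp [spiralMap]

@[simp]
lemma norm_spiralMap : ‖spiralMap c z‖ = ‖z‖ := by
  rw [spiralMap, norm_mul, norm_exp_I_mul_ofReal, mul_one]

lemma spiralMap_spiralMap : spiralMap c (spiralMap d z) = spiralMap (c + d) z := by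
  rw [spiralMap, norm_spiralMap, spiralMap, spiralMap, mul_assoc, ← exp_add]
  push_cast
  ring_nf

lemma norm_spiralMap_sub_le_of_norm_le (hwz : ‖w‖ ≤ ‖z‖) :
    ‖spiralMap c z - spiralMap c w‖ ≤ (1 + |c|) * ‖z - w‖ := by
  rcases eq_or_ne w 0 with rfl | hw
  · simp only [spiralMap_zero_right, sub_zero, norm_spiralMap]
    nlinarith [abs_nonneg c, norm_nonneg z]
  have hw_pos : 0 < ‖w‖ := norm_pos_iff.mpr hw
  have hz_pos : 0 < ‖z‖ := hw_pos.trans_le hwz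
  have hlog : 0 ≤ Real.log ‖z‖ - Real.log ‖w‖ :=
    sub_nonneg.mpr (Real.log_le_log hw_pos hwz)
  set ez := exp (I * ↑(c * Real.log ‖z‖))
  set ew := exp (I * ↑(c * Real.log ‖w‖))
  have decomp : spiralMap c z - spiralMap c w = (z - w) * ez + w * (ez - ew) := by
    simp only [spiralMap, ez, ew]; ring
  calc ‖spiralMap c z - spiralMap c w‖
      ≤ ‖z - w‖ * ‖ez‖ + ‖w‖ * ‖ez - ew‖ := by
        rw [decomp, ← norm_mul, ← norm_mul]; exact norm_add_le _ _
    _ ≤ ‖z - w‖ + ‖w‖ * |c * Real.log ‖z‖ - c * Real.log ‖w‖| := by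
        rw [norm_exp_I_mul_ofReal, mul_one]
        gcongr
        exact norm_exp_I_mul_ofReal_sub_exp_I_mul_ofReal_le _ _
    _ = ‖z - w‖ + |c| * (‖w‖ * (Real.log ‖z‖ - Real.log ‖w‖)) := by
        rw [← mul_sub, abs_mul, abs_of_nonneg hlog]; ring
    _ ≤ ‖z - w‖ + |c| * ‖z - w‖ := by
        gcongr
        exact (Real.mul_log_sub_log_le hw_pos hz_pos).trans (norm_sub_norm_le z w)
    _ = (1 + |c|) * ‖z - w‖ := by ring

lemma lipschitzWith_spiralMap : LipschitzWith (1 + ‖c‖₊) (spiralMap c) := by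
  refine LipschitzWith.of_dist_le_mul fun z w => ?_
  simp only [dist_eq_norm, NNReal.coe_add, NNReal.coe_one, coe_nnnorm, Real.norm_eq_abs]
  rcases le_total ‖w‖ ‖z‖ with hwz | hzw
  · exact norm_spiralMap_sub_le_of_norm_le c z w hwz
  · rw [norm_sub_rev, norm_sub_rev z]
    exact norm_spiralMap_sub_le_of_norm_le c w z hzw

theorem biLipGerm_spiralMap : BiLipGerm (spiralMap c) (spiralMap (-c)) :=
  ⟨spiralMap_zero_right c, spiralMap_zero_right (-c),
    ⟨_, univ_mem, _, (lipschitzWith_spiralMap c).lipschitzOnWith⟩,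
    ⟨_, univ_mem, _, (lipschitzWith_spiralMap (-c)).lipschitzOnWith⟩,
    .of_forall fun z => by simp [spiralMap_spiralMap],
    .of_forall fun z => by simp [spiralMap_spiralMap]⟩

end spiralMap

/-- **The logarithmic spiral map is a bi-Lipschitz homeomorphism germ.**
The map `h : (ℝ²,0) → (ℝ²,0)` given in polar coordinates by `(r,θ) ↦ (r, θ - log r)`
(identifying `ℝ² = ℂ`, `h z = z·exp(-i·log|z|)` for `z ≠ 0`, `h 0 = 0`) is a bi-Lipschitz
homeomorphism germ at the origin; in particular it sends the semi-line `θ = 0` to the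
logarithmic spiral `r ↦ r·exp(-i·log r)`. -/
theorem logSpiral_biLipschitz (h : ℂ → ℂ)
    (hh : ∀ z : ℂ, h z =
      if z = 0 then 0 else z * Complex.exp (-(Real.log ‖z‖) * Complex.I)) :
    (∃ ψ : ℂ → ℂ, BiLipGerm h ψ) ∧
      ∀ r : ℝ, 0 < r → h r = r * Complex.exp (-(Real.log r) * Complex.I) := by
  have h_eq : h = spiralMap (-1) := by
    funext z
    rw [hh]
    split_ifs with hz
    · rw [hz, spiralMap_zero_right]
    · rw [spiralMap]; push_cast; ring_nf
  refine ⟨⟨spiralMap 1, ?_⟩, fun r hr => ?_⟩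
  · simpa only [h_eq, neg_neg] using biLipGerm_spiralMap (-1)
  · rw [hh, if_neg (ofReal_ne_zero.mpr hr.ne'), norm_real, Real.norm_of_nonneg hr.le]
end

section
/- Let f, g : (ℂⁿ, 0) → (ℂ, 0) be holomorphic germs with isolated singularity at the origin. If f and g are bi-Lipschitz right-left equivalent (there exist bi-Lipschitz homeomorphism germs φ : (ℂⁿ,0) → (ℂⁿ,0) and φ' : (ℂ,0) → (ℂ,0) with φ'(f(x)) = g(φ(x)) near 0), then the Łojasiewicz exponents of their gradient maps coincide: 𝓛₀(∇f) = 𝓛₀(∇g). -/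
open Filter MeasureTheory Topology

/-!
A bi-Lipschitz change of coordinates `φ` in the source and `φ'` in the target can enlarge the
norm of the differential by at most the product of the Lipschitz constants: near `z = φ x`, the
germ `g = φ' ∘ f ∘ φ⁻¹` satisfies `‖g w - g z‖ ≤ K' (‖df x‖ + ε) K ‖w - z‖`. Hence
`‖∇g (φ x)‖ ≲ ‖∇f x‖`, while `‖x‖ ≲ ‖φ x‖`. So every Łojasiewicz exponent of `∇g` is one of
`∇f`, and by symmetry the two sets of exponents, hence their infima, coincide.
-/

open Filter Topology

namespace EvDom

variable {E F : Type*} [NormedAddCommGroup E] [NormedAddCommGroup F] {a b c : E → ℝ}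

theorem of_eventually_le_mul (hb : ∀ x, 0 ≤ b x) (C : ℝ) (h : ∀ᶠ x in 𝓝 0, a x ≤ C * b x) :
    EvDom a b :=
  ⟨max C 1, by positivity, h.mono fun x hx =>
    hx.trans (mul_le_mul_of_nonneg_right (le_max_left _ _) (hb x))⟩

theorem trans (hab : EvDom a b) (hbc : EvDom b c) : EvDom a c := by
  obtain ⟨C, hC, hab⟩ := hab
  obtain ⟨D, hD, hbc⟩ := hbc
  refine ⟨C * D, mul_pos hC hD, ?_⟩
  filter_upwards [hab, hbc] with x h₁ h₂
  calc a x ≤ C * b x := h₁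
    _ ≤ C * (D * c x) := by gcongr
    _ = C * D * c x := (mul_assoc _ _ _).symm

theorem comp {a b : F → ℝ} (h : EvDom a b) {φ : E → F} (hφ : Tendsto φ (𝓝 0) (𝓝 0)) :
    EvDom (a ∘ φ) (b ∘ φ) :=
  let ⟨C, hC, h⟩ := h
  ⟨C, hC, hφ.eventually h⟩

theorem rpow (h : EvDom a b) (ha : ∀ x, 0 ≤ a x) {α : ℝ} (hα : 0 ≤ α) :
    EvDom (fun x => a x ^ α) (fun x => b x ^ α) := by
  obtain ⟨C, hC, h⟩ := h
  refine ⟨C ^ α, by positivity, ?_⟩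
  filter_upwards [h] with x hx
  have hb : 0 ≤ b x := nonneg_of_mul_nonneg_right ((ha x).trans hx) hC
  rw [← Real.mul_rpow hC.le hb]
  exact Real.rpow_le_rpow (ha x) hx hα

end EvDom

namespace BiLipGerm

variable {E F G H : Type*} [NormedAddCommGroup E] [NormedAddCommGroup F]
  [NormedAddCommGroup G] [NormedAddCommGroup H] {φ : E → F} {ψ : F → E}

theorem symm (h : BiLipGerm φ ψ) : BiLipGerm ψ φ :=
  ⟨h.2.1, h.1, h.2.2.2.1, h.2.2.1, h.2.2.2.2.2, h.2.2.2.2.1⟩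

theorem tendsto (h : BiLipGerm φ ψ) : Tendsto φ (𝓝 0) (𝓝 0) := by
  obtain ⟨hφ0, -, ⟨U, hU, K, hK⟩, -⟩ := h
  simpa only [hφ0] using (hK.continuousOn.continuousAt hU).tendsto

theorem evDom_norm (h : BiLipGerm φ ψ) : EvDom (‖·‖) (fun x => ‖φ x‖) := by
  have hφ := h.tendsto
  obtain ⟨-, hψ0, -, ⟨V, hV, K, hK⟩, hψφ, -⟩ := h
  refine EvDom.of_eventually_le_mul (fun _ => norm_nonneg _) K ?_
  filter_upwards [hφ.eventually_mem hV, hψφ] with x hxV hx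
  calc ‖x‖ = ‖ψ (φ x) - ψ 0‖ := by rw [hx, hψ0, sub_zero]
    _ ≤ K * ‖φ x - 0‖ := hK.norm_sub_le hxV (mem_of_mem_nhds hV)
    _ = K * ‖φ x‖ := by rw [sub_zero]

theorem eventually_symm_comp_eq {f : E → G} {g : F → H} {φ' : G → H} {ψ' : H → G}
    (hφ : BiLipGerm φ ψ) (hφ' : BiLipGerm φ' ψ') (hf : ContinuousAt f 0) (hf0 : f 0 = 0)
    (heq : ∀ᶠ x in 𝓝 0, φ' (f x) = g (φ x)) :
    ∀ᶠ y in 𝓝 0, ψ' (g y) = f (ψ y) := by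
  have hfψ : Tendsto (f ∘ ψ) (𝓝 0) (𝓝 0) := hf0 ▸ hf.tendsto.comp hφ.symm.tendsto
  filter_upwards [hφ.2.2.2.2.2, hφ.symm.tendsto.eventually heq,
    hfψ.eventually hφ'.2.2.2.2.1] with y hφψ hy hψ'φ'
  calc ψ' (g y) = ψ' (g (φ (ψ y))) := by rw [hφψ]
    _ = f (ψ y) := by rw [← hy]; exact hψ'φ'

end BiLipGerm

section Lojasiewicz

variable {𝕜 : Type*} [NontriviallyNormedField 𝕜] {E F G H : Type*}
  [NormedAddCommGroup E] [NormedSpace 𝕜 E] [NormedAddCommGroup F] [NormedSpace 𝕜 F]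
  [NormedAddCommGroup G] [NormedSpace 𝕜 G] [NormedAddCommGroup H] [NormedSpace 𝕜 H]

theorem HasFDerivAt.eventually_norm_sub_le {f : E → F} {f' : E →L[𝕜] F} {x : E}
    (hf : HasFDerivAt f f' x) {C : ℝ} (hC : ‖f'‖ < C) :
    ∀ᶠ y in 𝓝 x, ‖f y - f x‖ ≤ C * ‖y - x‖ := by
  filter_upwards [hf.isLittleO.def (sub_pos.2 hC)] with y hy
  calc ‖f y - f x‖ ≤ ‖f' (y - x)‖ + ‖f y - f x - f' (y - x)‖ := norm_le_norm_add_norm_sub' _ _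
    _ ≤ ‖f'‖ * ‖y - x‖ + (C - ‖f'‖) * ‖y - x‖ := add_le_add (f'.le_opNorm _) hy
    _ = C * ‖y - x‖ := by ring

theorem norm_fderiv_le_of_eventuallyEq_comp {f : E → F} {g : G → H} {φ : F → H} {ψ : G → E}
    {x : E} {z : G} {U : Set F} {V : Set G} {K K' : NNReal}
    (hf : DifferentiableAt 𝕜 f x) (hφ : LipschitzOnWith K' φ U) (hU : U ∈ 𝓝 (f x))
    (hψ : LipschitzOnWith K ψ V) (hV : V ∈ 𝓝 z) (hψz : ψ z = x) (hg : g =ᶠ[𝓝 z] φ ∘ f ∘ ψ) :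
    ‖fderiv 𝕜 g z‖ ≤ K' * ‖fderiv 𝕜 f x‖ * K := by
  have hψ_tendsto : Tendsto ψ (𝓝 z) (𝓝 x) := hψz ▸ (hψ.continuousOn.continuousAt hV).tendsto
  have hgz : g z = φ (f x) := by rw [hg.eq_of_nhds, Function.comp_apply, Function.comp_apply, hψz]
  have hbound : ∀ C > ‖fderiv 𝕜 f x‖, ‖fderiv 𝕜 g z‖ ≤ K' * C * K := by
    intro C hC
    have hC₀ : 0 ≤ C := (norm_nonneg _).trans hC.le
    refine norm_fderiv_le_of_lip' 𝕜 (by positivity) ?_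
    filter_upwards [hg, hV, hψ_tendsto.eventually (hf.continuousAt.eventually_mem hU),
      hψ_tendsto.eventually (hf.hasFDerivAt.eventually_norm_sub_le hC)] with w hgw hwV hwU hwC
    calc ‖g w - g z‖ = ‖φ (f (ψ w)) - φ (f x)‖ := by
          rw [hgw, hgz, Function.comp_apply, Function.comp_apply]
      _ ≤ K' * ‖f (ψ w) - f x‖ := hφ.norm_sub_le hwU (mem_of_mem_nhds hU)
      _ ≤ K' * (C * ‖ψ w - ψ z‖) := by rw [hψz]; gcongr
      _ ≤ K' * (C * (K * ‖w - z‖)) := by gcongr; exact hψ.norm_sub_le hwV (mem_of_mem_nhds hV)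
      _ = K' * C * K * ‖w - z‖ := by ring
  have hcont : Tendsto (fun C : ℝ => K' * C * K) (𝓝[>] ‖fderiv 𝕜 f x‖)
      (𝓝 (K' * ‖fderiv 𝕜 f x‖ * K)) :=
    tendsto_nhdsWithin_of_tendsto_nhds (Continuous.tendsto (by fun_prop) _)
  exact ge_of_tendsto hcont (eventually_nhdsWithin_of_forall hbound)

variable (𝕜) in
def lojExponents (f : E → F) : Set ℝ :=
  {α | 0 ≤ α ∧ EvDom (fun x => ‖x‖ ^ α) (fun x => ‖fderiv 𝕜 f x‖)}

theorem lojGrad_eq_sInf_lojExponents {n : ℕ} (f : En n → ℂ) :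
    LojGrad f = sInf (lojExponents ℂ f) :=
  rfl

theorem evDom_norm_fderiv_comp {f : E → F} {g : G → H} {φ : E → G} {ψ : G → E}
    {φ' : F → H} {ψ' : H → F} (hf : ∀ᶠ x in 𝓝 0, DifferentiableAt 𝕜 f x) (hf0 : f 0 = 0)
    (hφ : BiLipGerm φ ψ) (hφ' : BiLipGerm φ' ψ') (heq : ∀ᶠ x in 𝓝 0, φ' (f x) = g (φ x)) :
    EvDom (fun x => ‖fderiv 𝕜 g (φ x)‖) (fun x => ‖fderiv 𝕜 f x‖) := by
  have hφ_tendsto := hφ.tendsto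
  have hf_cont : ContinuousAt f 0 := hf.self_of_nhds.continuousAt
  obtain ⟨-, -, -, ⟨V, hV, K, hK⟩, hψφ, hφψ⟩ := hφ
  obtain ⟨-, -, ⟨U, hU, K', hK'⟩, -⟩ := hφ'
  refine EvDom.of_eventually_le_mul (fun _ => norm_nonneg _) (K' * K) ?_
  filter_upwards [hf, heq.eventually_nhds, hψφ,
    hφ_tendsto.eventually (eventually_mem_nhds_iff.2 hV),
    hφ_tendsto.eventually (eventually_eventually_nhds.2 hφψ),
    hf_cont.eventually (eventually_mem_nhds_iff.2 (hf0 ▸ hU))] with x hfx heqx hx hxV hxφψ hxU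
  have hψ_tendsto : Tendsto ψ (𝓝 (φ x)) (𝓝 x) := by
    simpa only [hx] using (hK.continuousOn.continuousAt hxV).tendsto
  have hg : g =ᶠ[𝓝 (φ x)] φ' ∘ f ∘ ψ := by
    filter_upwards [hxφψ, hψ_tendsto.eventually heqx] with w hw hgw
    rw [Function.comp_apply, Function.comp_apply, hgw, hw]
  calc ‖fderiv 𝕜 g (φ x)‖ ≤ K' * ‖fderiv 𝕜 f x‖ * K :=
        norm_fderiv_le_of_eventuallyEq_comp hfx hK' hxU hK hxV hx hg
    _ = K' * K * ‖fderiv 𝕜 f x‖ := by ring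

theorem lojExponents_subset_of_biLipGerm {f : E → F} {g : G → H} {φ : E → G} {ψ : G → E}
    {φ' : F → H} {ψ' : H → F} (hf : ∀ᶠ x in 𝓝 0, DifferentiableAt 𝕜 f x) (hf0 : f 0 = 0)
    (hφ : BiLipGerm φ ψ) (hφ' : BiLipGerm φ' ψ') (heq : ∀ᶠ x in 𝓝 0, φ' (f x) = g (φ x)) :
    lojExponents 𝕜 g ⊆ lojExponents 𝕜 f := by
  rintro α ⟨hα, hg⟩
  exact ⟨hα, ((hφ.evDom_norm.rpow (fun _ => norm_nonneg _) hα).trans (hg.comp hφ.tendsto)).trans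
    (evDom_norm_fderiv_comp hf hf0 hφ hφ' heq)⟩

end Lojasiewicz

/-- **Bi-Lipschitz `𝒜`-invariance of the Łojasiewicz exponent of the gradient.**
If `f, g : (ℂⁿ,0) → (ℂ,0)` are holomorphic germs with isolated singularity at the origin and
they are bi-Lipschitz right-left equivalent, then `𝓛₀(∇f) = 𝓛₀(∇g)`. -/
theorem biLipschitz_A_equiv_lojGrad_eq {n : ℕ} (f g : En n → ℂ)
    (hf : IsolatedSing f) (hg : IsolatedSing g)
    (φ : En n → En n) (ψ : En n → En n) (hφ : BiLipGerm φ ψ)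
    (φ' : ℂ → ℂ) (ψ' : ℂ → ℂ) (hφ' : BiLipGerm φ' ψ')
    (heq : ∀ᶠ x in nhds (0 : En n), φ' (f x) = g (φ x)) :
    LojGrad f = LojGrad g := by
  have hfd := hf.1.eventually_analyticAt.mono fun _ h => h.differentiableAt
  have hgd := hg.1.eventually_analyticAt.mono fun _ h => h.differentiableAt
  have heq' := hφ.eventually_symm_comp_eq hφ' hf.1.continuousAt hf.2.1 heq
  rw [lojGrad_eq_sInf_lojExponents, lojGrad_eq_sInf_lojExponents,
    (lojExponents_subset_of_biLipGerm hfd hf.2.1 hφ hφ' heq).antisymm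
      (lojExponents_subset_of_biLipGerm hgd hg.2.1 hφ.symm hφ'.symm heq')]
end
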